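/- arXiv:2310.20284 — 5 statements merged into one kernel-verified Lean document; each statement's English description precedes it below -/
import Mathlib

section
/- Let n ≥ 1, let f : ℝⁿ → ℝ be a C^∞ function, and let x̄ ∈ ℝⁿ be a point at which the formal Taylor series of f is not identically zero, i.e. there exists k ≥ 0 such that the k-th iterated derivative of f at x̄ is nonzero. Then there exist an open neighborhood V of x̄ and a countable family of C^∞ functions g_m : ℝⁿ → ℝ (m ∈ ℕ) such that: (a) the derivative of g_m is nonzero at every point of the zero set {g_m = 0} (so each zero set {g_m = 0} is a C^∞ hypersurface, i.e. an embedded codimension-1 submanifold of ℝⁿ); and (b) {x ∈ V : f(x) = 0} ⊆ ⋃_m {x : g_m(x) = 0}. In other words, the zero set of f near x̄ is smoothly countably (n−1)-rectifiable. -/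
/-!
Let `x` be a zero of `f` in the open set `V = {D^k f ≠ 0}` and let `m + 1` be the first order
with `D^{m+1} f x ≠ 0`. Since `D^m f x = 0`, for directions `w` taken from a countable dense set
`x` is a zero of the smooth function `y ↦ D^m f y w` at which its derivative `D^{m+1} f x (·, w)`
is nonzero. So the zero set of `f` in `V` lies in countably many sets of regular zeros of smooth
functions `g`. Near a regular zero `p`, `g` agrees with `g p + dg(p)(· - p) + φ · R`, where `R` is
the Taylor remainder and `φ` a cutoff supported in a ball of radius `ρ`; as `‖dφ‖ = O(1/ρ)` while
`R = o(ρ)` and `dR = o(1)` there, the derivative of this function stays close to `dg(p) ≠ 0`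
everywhere. Lindelöf's theorem turns these local pieces into a countable cover.
-/

open Set Metric Topology
open scoped ContDiff

variable {E F : Type*} [NormedAddCommGroup E] [NormedSpace ℝ E] [NormedAddCommGroup F]
  [NormedSpace ℝ F]

/-- Bump functions of a fixed shape are rescalings of one another. -/
theorem ContDiffBump.exists_norm_fderiv_le [FiniteDimensional ℝ E] {R : ℝ} (hR : 1 < R) :
    ∃ C, ∀ (c : E) (f : ContDiffBump c), f.rOut = R * f.rIn → ∀ x, ‖fderiv ℝ f x‖ ≤ C / f.rIn := by
  let f₀ : ContDiffBump (0 : E) := ⟨1, R, one_pos, hR⟩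
  obtain ⟨C, hC⟩ : ∃ C, ∀ x, ‖fderiv ℝ f₀ x‖ ≤ C := by
    simpa using (f₀.contDiff.continuous_fderiv (n := 1) one_ne_zero).norm
      |>.bounded_above_of_compact_support
      (f₀.hasCompactSupport.fderiv (𝕜 := ℝ)).norm
  refine ⟨C, fun c f hf x => ?_⟩
  have hr := f.rIn_pos
  have h_eq : (f : E → ℝ) = f₀ ∘ fun y => f.rIn⁻¹ • (y - c) := by
    ext y
    simp only [Function.comp_apply, ContDiffBump.apply, f₀, hf, inv_one, one_smul, sub_zero,
      mul_div_cancel_right₀ _ hr.ne', div_one]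
  have h_inner :
      HasFDerivAt (fun y => f.rIn⁻¹ • (y - c)) (f.rIn⁻¹ • ContinuousLinearMap.id ℝ E) x :=
    ((hasFDerivAt_id x).sub_const c).const_smul _
  rw [h_eq, ((f₀.contDiff.differentiable one_ne_zero _).hasFDerivAt.comp x h_inner).fderiv]
  calc _ ≤ ‖fderiv ℝ f₀ (f.rIn⁻¹ • (x - c))‖ * ‖f.rIn⁻¹ • ContinuousLinearMap.id ℝ E‖ :=
        ContinuousLinearMap.opNorm_comp_le _ _
    _ ≤ C * f.rIn⁻¹ := by
        gcongr
        · exact (norm_nonneg _).trans (hC 0)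
        · exact hC _
        · rw [norm_smul, Real.norm_of_nonneg (inv_nonneg.2 hr.le)]
          exact mul_le_of_le_one_right (inv_nonneg.2 hr.le) ContinuousLinearMap.norm_id_le
    _ = C / f.rIn := by rw [div_eq_mul_inv]

theorem exists_pos_linearization_error_le {g : E → ℝ} (hg : ContDiff ℝ 1 g) (p : E) {δ : ℝ}
    (hδ : 0 < δ) : ∃ r > 0, ∀ y ∈ closedBall p r,
      ‖fderiv ℝ g y - fderiv ℝ g p‖ ≤ δ ∧ |g y - g p - fderiv ℝ g p (y - p)| ≤ δ * r := by
  obtain ⟨r, hr, hr_close⟩ := Metric.continuousAt_iff.1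
    (hg.continuous_fderiv one_ne_zero).continuousAt δ hδ
  have h_near : ∀ y ∈ closedBall p (r / 2), ‖fderiv ℝ g y - fderiv ℝ g p‖ ≤ δ := fun y hy => by
    rw [← dist_eq_norm]
    exact (hr_close ((mem_closedBall.1 hy).trans_lt (half_lt_self hr))).le
  refine ⟨r / 2, half_pos hr, fun y hy => ⟨h_near y hy, ?_⟩⟩
  calc |g y - g p - fderiv ℝ g p (y - p)| ≤ δ * ‖y - p‖ :=
        (convex_closedBall p (r / 2)).norm_image_sub_le_of_norm_fderiv_le'
          (fun z _ => hg.differentiable one_ne_zero z) h_near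
          (mem_closedBall_self (by positivity)) hy
    _ ≤ δ * (r / 2) := by gcongr; exact mem_closedBall_iff_norm.1 hy

theorem exists_fderiv_ne_zero_eqOn_closedBall [FiniteDimensional ℝ E] {n : ℕ∞} {g : E → ℝ}
    (hg : ContDiff ℝ n g) (hn : 1 ≤ n) {p : E} (hp : fderiv ℝ g p ≠ 0) :
    ∃ ρ > 0, ∃ h : E → ℝ, ContDiff ℝ n h ∧ (∀ y, fderiv ℝ h y ≠ 0) ∧ EqOn h g (closedBall p ρ) := by
  obtain ⟨C, hC⟩ := ContDiffBump.exists_norm_fderiv_le (E := E) one_lt_two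
  set L := fderiv ℝ g p
  have hL : 0 < ‖L‖ := norm_pos_iff.2 hp
  set δ := ‖L‖ / (2 * (1 + 2 * |C|)) with hδ_def
  obtain ⟨r, hr, h_lin⟩ :=
    exists_pos_linearization_error_le (hg.of_le (by exact_mod_cast hn)) p (by positivity : 0 < δ)
  let φ : ContDiffBump p := ⟨r / 2, r, half_pos hr, half_lt_self hr⟩
  set e : E → ℝ := fun y => g y - g p - L (y - p)
  have h_pert : ∀ y, ‖φ y • (fderiv ℝ g y - L) + e y • fderiv ℝ φ y‖ < ‖L‖ := by
    intro y
    by_cases hy : y ∈ closedBall p r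
    · calc _ ≤ |φ y| * ‖fderiv ℝ g y - L‖ + |e y| * ‖fderiv ℝ φ y‖ := by
            refine (norm_add_le _ _).trans_eq ?_
            rw [norm_smul, norm_smul, Real.norm_eq_abs, Real.norm_eq_abs]
        _ ≤ 1 * δ + δ * r * (|C| / (r / 2)) := by
            gcongr
            · exact abs_le.2 ⟨by linarith [φ.nonneg (x := y)], φ.le_one⟩
            · exact (h_lin y hy).1
            · exact (h_lin y hy).2
            · exact (hC p φ (by simp only [φ]; ring) y).trans (by gcongr; exact le_abs_self C)
        _ = ‖L‖ / 2 := by rw [hδ_def]; field_simp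
        _ < ‖L‖ := half_lt_self hL
    · have hy' : y ∉ tsupport φ := by rwa [φ.tsupport_eq]
      simpa [image_eq_zero_of_notMem_tsupport hy', fderiv_of_notMem_tsupport ℝ hy'] using hL
  have hn' : (n : WithTop ℕ∞) ≠ 0 := by exact_mod_cast (one_pos.trans_le hn).ne'
  refine ⟨r / 2, half_pos hr, fun y => g p + L (y - p) + φ y * e y, ?_, fun y => ?_, fun y hy => ?_⟩
  · have hL_smooth : ContDiff ℝ n fun y => L (y - p) :=
      L.contDiff.comp (contDiff_id.sub contDiff_const)
    exact (contDiff_const.add hL_smooth).add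
      (φ.contDiff.mul ((hg.sub contDiff_const).sub hL_smooth))
  · have hL_deriv : HasFDerivAt (fun y => L (y - p)) L y := by simpa using L.hasFDerivAt
    have he_deriv : HasFDerivAt e (fderiv ℝ g y - L) y :=
      ((hg.differentiable hn' y).hasFDerivAt.sub_const _).sub hL_deriv
    have hφ_deriv : HasFDerivAt φ (fderiv ℝ φ y) y :=
      (φ.contDiff (n := 1).differentiable one_ne_zero y).hasFDerivAt
    have h_deriv : HasFDerivAt (fun y => g p + L (y - p) + φ y * e y)
        (L + (φ y • (fderiv ℝ g y - L) + e y • fderiv ℝ φ y)) y :=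
      (hL_deriv.const_add _).add (hφ_deriv.mul he_deriv)
    rw [h_deriv.fderiv]
    exact fun h0 => (h_pert y).ne (by rw [eq_neg_of_add_eq_zero_right h0, norm_neg])
  · simp only [φ.one_of_mem_closedBall hy, e]
    ring

def IsSmoothDefiningFunction (h : E → ℝ) : Prop :=
  ContDiff ℝ ∞ h ∧ ∀ x, h x = 0 → fderiv ℝ h x ≠ 0

def SmoothlyCountablyRectifiable (S : Set E) : Prop :=
  ∃ G : Set (E → ℝ), G.Countable ∧ (∀ h ∈ G, IsSmoothDefiningFunction h) ∧
    S ⊆ ⋃ h ∈ G, {x | h x = 0}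

namespace SmoothlyCountablyRectifiable

theorem mono {S T : Set E} (hT : SmoothlyCountablyRectifiable T) (hST : S ⊆ T) :
    SmoothlyCountablyRectifiable S :=
  let ⟨G, hGc, hG, hTG⟩ := hT
  ⟨G, hGc, hG, hST.trans hTG⟩

theorem zeroSet {h : E → ℝ} (hh : IsSmoothDefiningFunction h) :
    SmoothlyCountablyRectifiable {x | h x = 0} :=
  ⟨{h}, countable_singleton h, by simpa using hh, by simp⟩

theorem iUnion {ι : Sort*} [Countable ι] {S : ι → Set E}
    (hS : ∀ i, SmoothlyCountablyRectifiable (S i)) : SmoothlyCountablyRectifiable (⋃ i, S i) := by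
  choose G hGc hG hSG using hS
  refine ⟨⋃ i, G i, countable_iUnion hGc, fun h hh => ?_, iUnion_subset fun i => ?_⟩
  · obtain ⟨i, hi⟩ := mem_iUnion.1 hh
    exact hG i h hi
  · exact (hSG i).trans (biUnion_mono (subset_iUnion G i) fun _ _ => le_rfl)

theorem of_forall_nhds [SecondCountableTopology E] {S : Set E}
    (hS : ∀ x ∈ S, ∃ U ∈ 𝓝 x, SmoothlyCountablyRectifiable (S ∩ U)) :
    SmoothlyCountablyRectifiable S := by
  choose! U hU hSU using hS
  obtain ⟨T, hTS, hTc, hST⟩ := TopologicalSpace.countable_cover_nhdsWithin fun x hx =>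
    mem_nhdsWithin_of_mem_nhds (hU x hx)
  have := hTc.to_subtype
  refine (iUnion fun x : T => hSU x (hTS x.2)).mono fun x hx => ?_
  obtain ⟨y, hyT, hxy⟩ := mem_iUnion₂.1 (hST hx)
  exact mem_iUnion.2 ⟨⟨y, hyT⟩, hx, hxy⟩

theorem exists_nat_family {S : Set E} (hS : SmoothlyCountablyRectifiable S) :
    ∃ g : ℕ → E → ℝ, (∀ m, ContDiff ℝ ∞ (g m)) ∧ (∀ m x, g m x = 0 → fderiv ℝ (g m) x ≠ 0) ∧
      S ⊆ ⋃ m, {x | g m x = 0} := by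
  obtain ⟨G, hGc, hG, hSG⟩ := hS
  -- the constant `1` has empty zero set; adjoining it makes the family nonempty
  obtain ⟨g, hg⟩ := (hGc.insert 1).exists_eq_range (insert_nonempty _ _)
  have hg_mem : ∀ m, IsSmoothDefiningFunction (g m) := fun m => by
    rcases (hg ▸ mem_range_self m : g m ∈ insert 1 G) with h1 | hm
    · rw [h1]
      exact ⟨contDiff_const, fun x hx => absurd hx one_ne_zero⟩
    · exact hG _ hm
  refine ⟨g, fun m => (hg_mem m).1, fun m => (hg_mem m).2, fun x hx => ?_⟩
  obtain ⟨h, hhG, hx⟩ := mem_iUnion₂.1 (hSG hx)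
  obtain ⟨m, rfl⟩ : h ∈ range g := hg ▸ mem_insert_of_mem _ hhG
  exact mem_iUnion.2 ⟨m, hx⟩

end SmoothlyCountablyRectifiable

theorem smoothlyCountablyRectifiable_regular_zeros [FiniteDimensional ℝ E] {g : E → ℝ}
    (hg : ContDiff ℝ ∞ g) : SmoothlyCountablyRectifiable {x | g x = 0 ∧ fderiv ℝ g x ≠ 0} := by
  refine SmoothlyCountablyRectifiable.of_forall_nhds fun p hp => ?_
  obtain ⟨ρ, hρ, h, hh, hdh, hhg⟩ := exists_fderiv_ne_zero_eqOn_closedBall hg le_top hp.2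
  refine ⟨closedBall p ρ, closedBall_mem_nhds p hρ,
    (SmoothlyCountablyRectifiable.zeroSet ⟨hh, fun y _ => hdh y⟩).mono ?_⟩
  rintro y ⟨⟨hy, -⟩, hyB⟩
  exact (hhg hyB).trans hy

theorem exists_iteratedFDeriv_eq_zero_succ_ne_zero {f : E → F} {x : E} (hfx : f x = 0)
    (hk : ∃ k, iteratedFDeriv ℝ k f x ≠ 0) :
    ∃ m, iteratedFDeriv ℝ m f x = 0 ∧ iteratedFDeriv ℝ (m + 1) f x ≠ 0 := by
  by_contra! h
  obtain ⟨k, hk⟩ := hk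
  refine hk (Nat.rec ?_ (fun m hm => h m hm) k)
  rw [← norm_eq_zero, norm_iteratedFDeriv_zero, hfx, norm_zero]

theorem exists_regular_zero_iteratedFDeriv_apply {f : E → F} (hf : ContDiff ℝ ∞ f) {D : Set E}
    (hD : Dense D) {x : E} (hfx : f x = 0) (hk : ∃ k, iteratedFDeriv ℝ k f x ≠ 0) :
    ∃ (m : ℕ) (w : Fin m → E), (∀ i, w i ∈ D) ∧ iteratedFDeriv ℝ m f x w = 0 ∧
      fderiv ℝ (fun y => iteratedFDeriv ℝ m f y w) x ≠ 0 := by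
  obtain ⟨m, hm, hm1⟩ := exists_iteratedFDeriv_eq_zero_succ_ne_zero hfx hk
  obtain ⟨v, hv⟩ : ∃ v, iteratedFDeriv ℝ (m + 1) f x v ≠ 0 := by
    by_contra! h
    exact hm1 (ContinuousMultilinearMap.ext h)
  -- `D^{m+1} f x v = (D (D^m f) x (v 0)) (tail v)`, and the set of tails where this multilinear
  -- map does not vanish is open, so it meets the dense set `D^m`
  set B := fderiv ℝ (iteratedFDeriv ℝ m f) x (v 0)
  obtain ⟨w, hwD, hwB⟩ := (dense_pi univ fun _ _ => hD).exists_mem_open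
    (isOpen_ne.preimage B.coe_continuous) ⟨Fin.tail v, hv⟩
  refine ⟨m, w, fun i => hwD i (mem_univ i), by simp [hm], fun h0 => hwB ?_⟩
  have hdiff : DifferentiableAt ℝ (iteratedFDeriv ℝ m f) x :=
    hf.differentiable_iteratedFDeriv (by exact_mod_cast WithTop.coe_lt_top _) x
  rw [← fderiv_continuousMultilinear_apply_const_apply hdiff, h0]
  rfl

theorem zero_set_countably_rectifiable_general {n : ℕ}
    (f : EuclideanSpace ℝ (Fin n) → ℝ) (hf : ContDiff ℝ (⊤ : ℕ∞) f)
    (x₀ : EuclideanSpace ℝ (Fin n))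
    (hx₀ : ∃ k : ℕ, iteratedFDeriv ℝ k f x₀ ≠ 0) :
    ∃ V : Set (EuclideanSpace ℝ (Fin n)), IsOpen V ∧ x₀ ∈ V ∧
      ∃ g : ℕ → EuclideanSpace ℝ (Fin n) → ℝ,
        (∀ m, ContDiff ℝ (⊤ : ℕ∞) (g m)) ∧
        (∀ m x, g m x = 0 → fderiv ℝ (g m) x ≠ 0) ∧
        {x | x ∈ V ∧ f x = 0} ⊆ ⋃ m : ℕ, {x | g m x = 0} := by
  obtain ⟨k, hk⟩ := hx₀
  obtain ⟨D, hDc, hD⟩ := TopologicalSpace.exists_countable_dense (EuclideanSpace ℝ (Fin n))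
  have := hDc.to_subtype
  let G (q : Σ m, Fin m → D) (y : EuclideanSpace ℝ (Fin n)) : ℝ :=
    iteratedFDeriv ℝ q.1 f y fun i => q.2 i
  have hG : ∀ q, ContDiff ℝ ∞ (G q) := fun q =>
    (ContinuousMultilinearMap.apply ℝ _ ℝ fun i => (q.2 i : EuclideanSpace ℝ (Fin n))).contDiff.comp
      (hf.iteratedFDeriv_right (by exact_mod_cast le_top))
  refine ⟨{x | iteratedFDeriv ℝ k f x ≠ 0},
    isOpen_ne.preimage (hf.continuous_iteratedFDeriv (by exact_mod_cast le_top)), hk,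
    SmoothlyCountablyRectifiable.exists_nat_family <|
      (SmoothlyCountablyRectifiable.iUnion fun q =>
        smoothlyCountablyRectifiable_regular_zeros (hG q)).mono ?_⟩
  rintro x ⟨hxk, hfx⟩
  obtain ⟨m, w, hwD, hx⟩ := exists_regular_zero_iteratedFDeriv_apply hf hD hfx ⟨k, hxk⟩
  exact mem_iUnion.2 ⟨⟨m, fun i => ⟨w i, hwD i⟩⟩, hx⟩

/-- if `f : ℝⁿ → ℝ` is `C^∞` and its formal Taylor series at `x̄` is not
identically zero, then there is an open neighborhood `V` of `x̄` and countably many smooth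
functions `g_m` whose derivative does not vanish on their zero sets (so each `{g_m = 0}` is a
smooth hypersurface) such that the zero set of `f` in `V` is covered by `⋃_m {g_m = 0}`:
the zero set of `f` near `x̄` is smoothly countably `(n−1)`-rectifiable. -/
theorem zero_set_countably_rectifiable {n : ℕ} (hn : 1 ≤ n)
    (f : EuclideanSpace ℝ (Fin n) → ℝ) (hf : ContDiff ℝ (⊤ : ℕ∞) f)
    (x₀ : EuclideanSpace ℝ (Fin n))
    (hx₀ : ∃ k : ℕ, iteratedFDeriv ℝ k f x₀ ≠ 0) :
    ∃ V : Set (EuclideanSpace ℝ (Fin n)), IsOpen V ∧ x₀ ∈ V ∧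
      ∃ g : ℕ → EuclideanSpace ℝ (Fin n) → ℝ,
        (∀ m, ContDiff ℝ (⊤ : ℕ∞) (g m)) ∧
        (∀ m x, g m x = 0 → fderiv ℝ (g m) x ≠ 0) ∧
        {x | x ∈ V ∧ f x = 0} ⊆ ⋃ m : ℕ, {x | g m x = 0} :=
  zero_set_countably_rectifiable_general f hf x₀ hx₀
end

section
/- Let n ≥ 1, let U ⊆ ℝⁿ be an open set, and let f : ℝⁿ → ℝ be a C^∞ function such that at every point x ∈ U the formal Taylor series of f at x is not identically zero, i.e. for every x ∈ U there exists k ≥ 0 such that the k-th iterated derivative of f at x is nonzero. Then the zero set {x ∈ U : f(x) = 0} has Lebesgue measure zero in ℝⁿ. -/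
/-!
Where `f` vanishes but its Taylor series does not, some iterated derivative `D^j f` vanishes
while `D^{j+1} f` does not, so the zero set is covered by countably many sets of the form
`{G = 0, DG ≠ 0}` with `G = D^j f` smooth. Near a point of such a set, composing `G` with a
continuous functional gives a real function that is strictly increasing along every line in a
suitable direction `v` inside a small ball, so each such line meets its zero set at most once.
A measurable set `S` meeting every line in direction `v` in a null set is null: by translation
invariance, every slice `{y | y + t • v ∈ S}` of `{(t, y) | y + t • v ∈ S}` has the measure of
`S`, while Tonelli's theorem computes the measure of this set from its null slices in `t`.
-/

open MeasureTheory Metric Set Filter Topology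

section LineSlices

variable {E : Type*} [NormedAddCommGroup E] [NormedSpace ℝ E]

theorem measure_eq_zero_of_forall_volume_lineSlice_eq_zero [MeasurableSpace E] [BorelSpace E]
    [SecondCountableTopology E] (μ : Measure E) [SFinite μ] [μ.IsAddRightInvariant]
    {S : Set E} (hS : MeasurableSet S) (v : E)
    (hslice : ∀ y, volume {t : ℝ | y + t • v ∈ S} = 0) : μ S = 0 := by
  set T : Set (ℝ × E) := {p | p.2 + p.1 • v ∈ S}
  have hT : MeasurableSet T := hS.preimage (by fun_prop)
  have hnull : volume.prod μ T = 0 := by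
    rw [Measure.prod_apply_symm hT]
    simp [T, hslice]
  have hae : ∀ᵐ _ : ℝ, μ S = 0 := by
    filter_upwards [(Measure.measure_prod_null hT).1 hnull] with t ht
    rwa [← measure_preimage_add_right μ (t • v)]
  exact eventually_const.1 hae

theorem strictMonoOn_comp_add_smul_of_fderiv_pos {g : E → ℝ} {K : Set E} (hK : Convex ℝ K)
    (hg : ∀ z ∈ K, DifferentiableAt ℝ g z) {v : E} (hpos : ∀ z ∈ K, 0 < fderiv ℝ g z v)
    (y : E) : StrictMonoOn (fun t : ℝ => g (y + t • v)) {t | y + t • v ∈ K} := by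
  have hconv : Convex ℝ {t : ℝ | y + t • v ∈ K} := by
    have : {t : ℝ | y + t • v ∈ K} = AffineMap.lineMap y (y + v) ⁻¹' K := by
      ext t; simp [AffineMap.lineMap_apply, add_comm]
    exact this ▸ hK.affine_preimage _
  have hderiv : ∀ t ∈ {t : ℝ | y + t • v ∈ K},
      HasDerivAt (fun t : ℝ => g (y + t • v)) (fderiv ℝ g (y + t • v) v) t := fun t ht =>
    (hg _ ht).hasFDerivAt.comp_hasDerivAt t
      (by simpa using ((hasDerivAt_id t).smul_const v).const_add y)
  refine strictMonoOn_of_deriv_pos hconv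
    (fun t ht => (hderiv t ht).continuousAt.continuousWithinAt) fun t ht => ?_
  have ht : t ∈ {t : ℝ | y + t • v ∈ K} := interior_subset ht
  rw [(hderiv t ht).deriv]
  exact hpos _ ht

end LineSlices

section ZeroSets

variable {E : Type*} [NormedAddCommGroup E] [NormedSpace ℝ E] [MeasurableSpace E] [BorelSpace E]
  [SecondCountableTopology E] (μ : Measure E) [SFinite μ] [μ.IsAddRightInvariant]

theorem exists_mem_nhds_measure_inter_zeros_eq_zero {g : E → ℝ} (hg : ContDiff ℝ 1 g) {x : E}
    (hx : fderiv ℝ g x ≠ 0) : ∃ u ∈ 𝓝 x, μ (u ∩ g ⁻¹' {0}) = 0 := by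
  obtain ⟨w, hw⟩ : ∃ w, fderiv ℝ g x w ≠ 0 := by simpa using DFunLike.ne_iff.1 hx
  set v := (fderiv ℝ g x w)⁻¹ • w
  have hv : 0 < fderiv ℝ g x v := by simp [v, hw]
  have hcont : Continuous fun z => fderiv ℝ g z v :=
    (hg.continuous_fderiv one_ne_zero).clm_apply continuous_const
  obtain ⟨r, hr, hball⟩ := nhds_basis_closedBall.eventually_iff.1
    (hcont.continuousAt.eventually (lt_mem_nhds hv))
  refine ⟨closedBall x r, closedBall_mem_nhds x hr, ?_⟩
  have hS : MeasurableSet (closedBall x r ∩ g ⁻¹' {0}) :=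
    (isClosed_closedBall.inter (isClosed_singleton.preimage hg.continuous)).measurableSet
  refine measure_eq_zero_of_forall_volume_lineSlice_eq_zero μ hS v fun y => ?_
  have hmono := strictMonoOn_comp_add_smul_of_fderiv_pos (convex_closedBall x r)
    (fun z _ => hg.differentiable one_ne_zero z) hball y
  exact Set.Subsingleton.measure_zero
    (fun s hs t ht => hmono.injOn hs.1 ht.1 (hs.2.trans ht.2.symm)) _

theorem measure_setOf_eq_zero_and_fderiv_ne_zero {F : Type*} [NormedAddCommGroup F]
    [NormedSpace ℝ F] {G : E → F} (hG : ContDiff ℝ 1 G) :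
    μ {y | G y = 0 ∧ fderiv ℝ G y ≠ 0} = 0 := by
  refine measure_null_of_locally_null _ fun x ⟨_, hx⟩ => ?_
  obtain ⟨w, hw⟩ : ∃ w, fderiv ℝ G x w ≠ 0 := by simpa using DFunLike.ne_iff.1 hx
  obtain ⟨ℓ, -, hℓ⟩ := exists_dual_vector ℝ _ (norm_ne_zero_iff.2 hw)
  have hℓG : fderiv ℝ (ℓ ∘ G) x ≠ 0 := by
    rw [(ℓ.hasFDerivAt.comp x (hG.differentiable one_ne_zero x).hasFDerivAt).fderiv]
    exact DFunLike.ne_iff.2 ⟨w, by simp [hℓ, hw]⟩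
  obtain ⟨u, hu, hnull⟩ :=
    exists_mem_nhds_measure_inter_zeros_eq_zero μ (ℓ.contDiff.comp hG) hℓG
  refine ⟨_, inter_mem_nhdsWithin _ hu, measure_mono_null ?_ hnull⟩
  rintro y ⟨⟨hy, -⟩, hyu⟩
  exact ⟨hyu, by simp [hy]⟩

end ZeroSets

theorem exists_iteratedFDeriv_eq_zero_and_fderiv_ne_zero {𝕜 E F : Type*}
    [NontriviallyNormedField 𝕜] [NormedAddCommGroup E] [NormedSpace 𝕜 E]
    [NormedAddCommGroup F] [NormedSpace 𝕜 F] {f : E → F} {x : E} (h0 : f x = 0)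
    (hk : ∃ k, iteratedFDeriv 𝕜 k f x ≠ 0) :
    ∃ j, iteratedFDeriv 𝕜 j f x = 0 ∧ fderiv 𝕜 (iteratedFDeriv 𝕜 j f) x ≠ 0 := by
  by_contra! h
  obtain ⟨k, hk⟩ := hk
  have hzero : ∀ j, iteratedFDeriv 𝕜 j f x = 0 := by
    intro j
    induction j with
    | zero => ext; simp [h0]
    | succ j ih => rw [iteratedFDeriv_succ_eq_comp_left, Function.comp_apply, h j ih,
      LinearIsometryEquiv.map_zero]
  exact hk (hzero k)

theorem zero_set_measure_zero_general {n : ℕ}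
    (U : Set (EuclideanSpace ℝ (Fin n)))
    (f : EuclideanSpace ℝ (Fin n) → ℝ) (hf : ContDiff ℝ (⊤ : ℕ∞) f)
    (hx : ∀ x ∈ U, ∃ k : ℕ, iteratedFDeriv ℝ k f x ≠ 0) :
    MeasureTheory.volume {x | x ∈ U ∧ f x = 0} = 0 := by
  have hcover : {x | x ∈ U ∧ f x = 0} ⊆
      ⋃ j, {y | iteratedFDeriv ℝ j f y = 0 ∧ fderiv ℝ (iteratedFDeriv ℝ j f) y ≠ 0} :=
    fun y ⟨hyU, hy0⟩ =>
      mem_iUnion.2 (exists_iteratedFDeriv_eq_zero_and_fderiv_ne_zero hy0 (hx y hyU))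
  refine measure_mono_null hcover (measure_iUnion_null fun j => ?_)
  exact measure_setOf_eq_zero_and_fderiv_ne_zero volume
    (hf.iteratedFDeriv_right (by exact_mod_cast le_top))

/-- if `f : ℝⁿ → ℝ` is `C^∞` and, at every point of an open set `U`, its formal
Taylor series is not identically zero, then the zero set of `f` in `U` has Lebesgue measure
zero. -/
theorem zero_set_measure_zero {n : ℕ} (hn : 1 ≤ n)
    (U : Set (EuclideanSpace ℝ (Fin n))) (hU : IsOpen U)
    (f : EuclideanSpace ℝ (Fin n) → ℝ) (hf : ContDiff ℝ (⊤ : ℕ∞) f)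
    (hx : ∀ x ∈ U, ∃ k : ℕ, iteratedFDeriv ℝ k f x ≠ 0) :
    MeasureTheory.volume {x | x ∈ U ∧ f x = 0} = 0 :=
  zero_set_measure_zero_general U f hf hx
end

section
/- Let n ≥ 1, let Z : ℝⁿ → ℝⁿ be a C^∞ vector field, and let φ : ℝ × ℝⁿ → ℝⁿ be a C^∞ map satisfying φ(0,x) = x, φ(t+s,x) = φ(t, φ(s,x)), and ∂φ/∂t (t,x) = Z(φ(t,x)) for all t, s ∈ ℝ and x ∈ ℝⁿ (a global flow of Z). Suppose there are constants K ≥ 0 and C ≥ 0 such that |div(Z)(x)| ≤ K·‖Z(x)‖ for every x ∈ ℝⁿ, and let S ⊆ ℝⁿ be a Lebesgue-measurable set such that ∫₀ᵗ ‖Z(φ(s,z))‖ ds ≤ C for every z ∈ S and every t ≥ 0. Then for every t ≥ 0 the Lebesgue measure of the image φ_t(S) := {φ(t,z) : z ∈ S} satisfies vol(φ_t(S)) ≥ e^{−K·C}·vol(S). -/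
/-!
Let `J_t(z) = Dφ_t(z)`. Differentiating `∂_t φ_t = Z ∘ φ_t` in space (mixed partials commute)
gives the variational equation `∂_t J_t = DZ(φ_t) ∘ J_t`, and Jacobi's formula for the derivative
of a determinant turns it into Liouville's formula `det J_t(z) = exp ∫₀ᵗ div Z(φ_s z) ds`.
For `z ∈ S` the bound `|div Z| ≤ K ‖Z‖` keeps the exponent above `-K C`, and the change of
variables formula for the injective map `φ_t` gives `vol(φ_t S) = ∫_S det J_t ≥ e^{-KC} vol S`.
-/

/-- The divergence of a vector field `Z : ℝⁿ → ℝⁿ` at `x`: the trace of its Jacobian. -/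
noncomputable def divergence {n : ℕ} (Z : EuclideanSpace ℝ (Fin n) → EuclideanSpace ℝ (Fin n))
    (x : EuclideanSpace ℝ (Fin n)) : ℝ :=
  LinearMap.trace ℝ (EuclideanSpace ℝ (Fin n)) (fderiv ℝ Z x).toLinearMap

open MeasureTheory

namespace Matrix

variable {𝕜 ι : Type*} [NontriviallyNormedField 𝕜] [Fintype ι] [DecidableEq ι]

noncomputable def detRowContinuousMultilinear :
    ContinuousMultilinearMap 𝕜 (fun _ : ι => ι → 𝕜) 𝕜 where
  toMultilinearMap := detRowAlternating.toMultilinearMap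
  cont := (continuous_id.matrix_det : Continuous fun m : Matrix ι ι 𝕜 => m.det)

theorem hasDerivAt_det {m : 𝕜 → ι → ι → 𝕜} {m' : ι → ι → 𝕜} {t : 𝕜}
    (hm : HasDerivAt m m' t) :
    HasDerivAt (fun τ => (of (m τ)).det) (∑ i, ((of (m t)).updateRow i (m' i)).det) t := by
  have h := ((detRowContinuousMultilinear (𝕜 := 𝕜) (ι := ι)).hasFDerivAt (m t)).comp_hasDerivAt t hm
  rw [ContinuousMultilinearMap.linearDeriv_apply] at h
  exact h

theorem sum_det_updateRow_mul (A B : Matrix ι ι 𝕜) :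
    ∑ i, (A.updateRow i ((B * A) i)).det = B.trace * A.det := by
  simp_rw [mul_apply_eq_vecMul, vecMul_eq_sum, det_updateRow_sum, trace, Finset.sum_mul]
  rfl

theorem hasDerivAt_det_of_hasDerivAt_mul {m : 𝕜 → ι → ι → 𝕜} {B : Matrix ι ι 𝕜} {t : 𝕜}
    (hm : HasDerivAt m (B * of (m t)) t) :
    HasDerivAt (fun τ => (of (m τ)).det) (B.trace * (of (m t)).det) t :=
  sum_det_updateRow_mul (of (m t)) B ▸ hasDerivAt_det hm

end Matrix

namespace ContinuousLinearMap

variable {𝕜 E : Type*} [NontriviallyNormedField 𝕜] [CompleteSpace 𝕜] [NormedAddCommGroup E]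
  [NormedSpace 𝕜 E] [FiniteDimensional 𝕜 E]

theorem hasDerivAt_det_of_hasDerivAt_comp {A : 𝕜 → E →L[𝕜] E} {B : E →L[𝕜] E} {t : 𝕜}
    (hA : HasDerivAt A (B ∘L A t) t) :
    HasDerivAt (fun τ => (A τ).det) (LinearMap.trace 𝕜 E B * (A t).det) t := by
  let b := Module.finBasis 𝕜 E
  let toMatrix : (E →L[𝕜] E) →L[𝕜] (Fin _ → Fin _ → 𝕜) :=
    LinearMap.toContinuousLinearMap ((LinearMap.toMatrix b b).toLinearMap ∘ₗ coeLM 𝕜)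
  have hm : HasDerivAt (fun τ => toMatrix (A τ))
      (LinearMap.toMatrix b b B * Matrix.of (toMatrix (A t))) t := by
    refine (toMatrix.hasFDerivAt.comp_hasDerivAt t hA).congr_deriv ?_
    change LinearMap.toMatrix b b (B ∘L A t : E →ₗ[𝕜] E) = _
    rw [toLinearMap_comp, LinearMap.toMatrix_comp b b b]
    rfl
  have hdet (τ : 𝕜) : (A τ).det = (Matrix.of (toMatrix (A τ))).det :=
    (LinearMap.det_toMatrix b _).symm
  simp_rw [hdet, LinearMap.trace_eq_matrix_trace 𝕜 b]
  exact Matrix.hasDerivAt_det_of_hasDerivAt_mul hm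

end ContinuousLinearMap

theorem continuous_trace_fderiv_comp {α E : Type*} [TopologicalSpace α] [NormedAddCommGroup E]
    [NormedSpace ℝ E] [FiniteDimensional ℝ E] {Z : E → E} (hZ : ContDiff ℝ 1 Z) {γ : α → E}
    (hγ : Continuous γ) : Continuous fun s => LinearMap.trace ℝ E (fderiv ℝ Z (γ s)) :=
  (LinearMap.trace ℝ E ∘ₗ ContinuousLinearMap.coeLM ℝ).continuous_of_finiteDimensional.comp
    ((hZ.continuous_fderiv one_ne_zero).comp hγ)

theorem eq_mul_exp_integral_of_hasDerivAt_mul {g a : ℝ → ℝ} (ha : Continuous a)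
    (hg : ∀ τ, HasDerivAt g (a τ * g τ) τ) (t : ℝ) :
    g t = g 0 * Real.exp (∫ s in (0 : ℝ)..t, a s) := by
  let I := fun w => ∫ s in (0 : ℝ)..w, a s
  have hI (τ : ℝ) : HasDerivAt I (a τ) τ := (ha.integral_hasStrictDerivAt 0 τ).hasDerivAt
  have hconst (τ : ℝ) : HasDerivAt (fun w => g w * Real.exp (-I w)) 0 τ :=
    ((hg τ).mul (hI τ).neg.exp).congr_deriv (by ring)
  have h := is_const_of_deriv_eq_zero (fun w => (hconst w).differentiableAt)
    (fun w => (hconst w).deriv) t 0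
  simp only [I, intervalIntegral.integral_same, neg_zero, Real.exp_zero, mul_one,
    Real.exp_neg] at h
  rw [← h, inv_mul_cancel_right₀ (Real.exp_ne_zero _)]

open ContinuousLinearMap in
theorem hasDerivAt_fderiv_of_hasDerivAt {E F : Type*} [NormedAddCommGroup E] [NormedSpace ℝ E]
    [NormedAddCommGroup F] [NormedSpace ℝ F] {φ V : ℝ → E → F}
    (hφ : ContDiff ℝ 2 (fun p : ℝ × E => φ p.1 p.2))
    (hV : ∀ τ x, HasDerivAt (fun s => φ s x) (V τ x) τ) (τ : ℝ) (z : E) :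
    HasDerivAt (fun s => fderiv ℝ (φ s) z) (fderiv ℝ (V τ) z) τ := by
  let ψ := fun p : ℝ × E => φ p.1 p.2
  have hψ (p : ℝ × E) : HasFDerivAt ψ (fderiv ℝ ψ p) p :=
    (hφ.differentiable two_ne_zero p).hasFDerivAt
  have hψ' : HasFDerivAt (fderiv ℝ ψ) (fderiv ℝ (fderiv ℝ ψ) (τ, z)) (τ, z) :=
    ((hφ.fderiv_right one_add_one_eq_two.le).differentiable one_ne_zero _).hasFDerivAt
  set ψ'' := fderiv ℝ (fderiv ℝ ψ) (τ, z)
  have hline (s : ℝ) (x : E) : HasDerivAt (fun s' : ℝ => (s', x)) ((1 : ℝ), (0 : E)) s :=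
    (hasDerivAt_id s).prodMk (hasDerivAt_const s x)
  have hspace (s : ℝ) (x : E) : fderiv ℝ (φ s) x = fderiv ℝ ψ (s, x) ∘L inr ℝ ℝ E :=
    ((hψ (s, x)).comp x (hasFDerivAt_prodMk_right s x)).fderiv
  have htime (s : ℝ) : V s = fun x => fderiv ℝ ψ (s, x) (1, 0) := funext fun x => by
    have h := (hψ (s, x)).comp_hasDerivAt s (hline s x)
    exact (hV s x).unique h
  have hV' : HasFDerivAt (V τ) (apply ℝ F ((1 : ℝ), (0 : E)) ∘L ψ'' ∘L inr ℝ ℝ E) z := by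
    rw [htime]
    exact (apply ℝ F ((1 : ℝ), (0 : E))).hasFDerivAt.comp z
      (hψ'.comp z (hasFDerivAt_prodMk_right τ z))
  have hspace' : HasDerivAt (fun s => fderiv ℝ ψ (s, z) ∘L inr ℝ ℝ E)
      (ψ'' (1, 0) ∘L inr ℝ ℝ E) τ := by
    have h : HasDerivAt (fun s => fderiv ℝ ψ (s, z)) (ψ'' (1, 0)) τ :=
      hψ'.comp_hasDerivAt τ (hline τ z)
    exact (h.clm_comp (hasDerivAt_const τ (inr ℝ ℝ E))).congr_deriv (by simp)
  simp_rw [hspace, hV'.fderiv]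
  refine hspace'.congr_deriv (ext fun v => ?_)
  exact second_derivative_symmetric hψ hψ' (1, 0) (0, v)

theorem leftInverse_flow_neg {α : Type*} {φ : ℝ → α → α} (hφ_zero : ∀ x, φ 0 x = x)
    (hφ_add : ∀ t s x, φ (t + s) x = φ t (φ s x)) (t : ℝ) :
    Function.LeftInverse (φ (-t)) (φ t) := fun x => by
  rw [← hφ_add, neg_add_cancel, hφ_zero]

theorem differentiable_of_differentiable_uncurry {E F : Type*} [NormedAddCommGroup E]
    [NormedSpace ℝ E] [NormedAddCommGroup F] [NormedSpace ℝ F] {φ : ℝ → E → F}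
    (hφ : Differentiable ℝ (fun p : ℝ × E => φ p.1 p.2)) (t : ℝ) : Differentiable ℝ (φ t) :=
  hφ.comp ((differentiable_const t).prodMk differentiable_id)

section Flow

variable {E : Type*} [NormedAddCommGroup E] [NormedSpace ℝ E] {Z : E → E} {φ : ℝ → E → E}

theorem fderiv_flow_zero (hφ_zero : ∀ x, φ 0 x = x) (z : E) :
    fderiv ℝ (φ 0) z = ContinuousLinearMap.id ℝ E := by
  rw [show φ 0 = id from funext hφ_zero, fderiv_id]

theorem hasDerivAt_fderiv_flow (hZ : Differentiable ℝ Z)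
    (hφ : ContDiff ℝ 2 (fun p : ℝ × E => φ p.1 p.2))
    (hφ_deriv : ∀ t x, HasDerivAt (fun τ => φ τ x) (Z (φ t x)) t) (t : ℝ) (z : E) :
    HasDerivAt (fun τ => fderiv ℝ (φ τ) z) (fderiv ℝ Z (φ t z) ∘L fderiv ℝ (φ t) z) t := by
  have hφ_t := differentiable_of_differentiable_uncurry (hφ.differentiable two_ne_zero) t
  have h := hasDerivAt_fderiv_of_hasDerivAt hφ hφ_deriv t z
  rwa [fderiv_fun_comp z (hZ _) (hφ_t z)] at h

variable [FiniteDimensional ℝ E]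

theorem det_fderiv_flow (hZ : ContDiff ℝ 1 Z)
    (hφ : ContDiff ℝ 2 (fun p : ℝ × E => φ p.1 p.2)) (hφ_zero : ∀ x, φ 0 x = x)
    (hφ_deriv : ∀ t x, HasDerivAt (fun τ => φ τ x) (Z (φ t x)) t) (t : ℝ) (z : E) :
    (fderiv ℝ (φ t) z).det =
      Real.exp (∫ s in (0 : ℝ)..t, LinearMap.trace ℝ E (fderiv ℝ Z (φ s z))) := by
  have h := eq_mul_exp_integral_of_hasDerivAt_mul
    (continuous_trace_fderiv_comp hZ (hφ.continuous.comp (continuous_id.prodMk continuous_const)))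
    (fun τ => ContinuousLinearMap.hasDerivAt_det_of_hasDerivAt_comp
      (hasDerivAt_fderiv_flow (hZ.differentiable one_ne_zero) hφ hφ_deriv τ z)) t
  have hdet_id : (ContinuousLinearMap.id ℝ E).det = 1 := LinearMap.det_id
  rwa [fderiv_flow_zero hφ_zero, hdet_id, one_mul] at h

theorem exp_neg_mul_le_det_fderiv_flow (hZ : ContDiff ℝ 1 Z)
    (hφ : ContDiff ℝ 2 (fun p : ℝ × E => φ p.1 p.2)) (hφ_zero : ∀ x, φ 0 x = x)
    (hφ_deriv : ∀ t x, HasDerivAt (fun τ => φ τ x) (Z (φ t x)) t) {K C : ℝ} (hK : 0 ≤ K)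
    (hdiv : ∀ x, |LinearMap.trace ℝ E (fderiv ℝ Z x)| ≤ K * ‖Z x‖) {t : ℝ} (ht : 0 ≤ t) {z : E}
    (hint : ∫ s in (0 : ℝ)..t, ‖Z (φ s z)‖ ≤ C) :
    Real.exp (-(K * C)) ≤ (fderiv ℝ (φ t) z).det := by
  have hφz : Continuous fun s => φ s z := hφ.continuous.comp (continuous_id.prodMk continuous_const)
  rw [det_fderiv_flow hZ hφ hφ_zero hφ_deriv, Real.exp_le_exp, neg_le]
  calc -∫ s in (0 : ℝ)..t, LinearMap.trace ℝ E (fderiv ℝ Z (φ s z))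
      ≤ ∫ s in (0 : ℝ)..t, |LinearMap.trace ℝ E (fderiv ℝ Z (φ s z))| :=
        (neg_le_abs _).trans (intervalIntegral.abs_integral_le_integral_abs ht)
    _ ≤ ∫ s in (0 : ℝ)..t, K * ‖Z (φ s z)‖ :=
        intervalIntegral.integral_mono_on ht
          ((continuous_trace_fderiv_comp hZ hφz).abs.intervalIntegrable 0 t)
          ((continuous_const.mul (hZ.continuous.comp hφz).norm).intervalIntegrable 0 t)
          fun s _ => hdiv (φ s z)
    _ ≤ K * C := by
        rw [intervalIntegral.integral_const_mul]
        exact mul_le_mul_of_nonneg_left hint hK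

end Flow

theorem volume_flow_lower_bound_general {n : ℕ}
    (Z : EuclideanSpace ℝ (Fin n) → EuclideanSpace ℝ (Fin n)) (hZ : ContDiff ℝ (⊤ : ℕ∞) Z)
    (φ : ℝ → EuclideanSpace ℝ (Fin n) → EuclideanSpace ℝ (Fin n))
    (hφ_smooth : ContDiff ℝ (⊤ : ℕ∞) (fun p : ℝ × EuclideanSpace ℝ (Fin n) => φ p.1 p.2))
    (hφ_zero : ∀ x, φ 0 x = x)
    (hφ_add : ∀ t s x, φ (t + s) x = φ t (φ s x))
    (hφ_deriv : ∀ t x, HasDerivAt (fun τ => φ τ x) (Z (φ t x)) t)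
    (K C : ℝ) (hK : 0 ≤ K)
    (hdiv : ∀ x, |divergence Z x| ≤ K * ‖Z x‖)
    (S : Set (EuclideanSpace ℝ (Fin n))) (hS : MeasurableSet S)
    (hint : ∀ z ∈ S, ∀ t : ℝ, 0 ≤ t → (∫ s in (0:ℝ)..t, ‖Z (φ s z)‖) ≤ C) :
    ∀ t : ℝ, 0 ≤ t →
      ENNReal.ofReal (Real.exp (-(K * C))) * MeasureTheory.volume S ≤
        MeasureTheory.volume (φ t '' S) := by
  intro t ht
  have hZ₁ : ContDiff ℝ 1 Z := hZ.of_le (WithTop.coe_le_coe.mpr le_top)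
  have hφ₂ : ContDiff ℝ 2 (fun p : ℝ × EuclideanSpace ℝ (Fin n) => φ p.1 p.2) :=
    hφ_smooth.of_le (WithTop.coe_le_coe.mpr le_top)
  have hdet (z) (hz : z ∈ S) : Real.exp (-(K * C)) ≤ |(fderiv ℝ (φ t) z).det| :=
    (exp_neg_mul_le_det_fderiv_flow hZ₁ hφ₂ hφ_zero hφ_deriv hK hdiv ht (hint z hz t ht)).trans
      (le_abs_self _)
  have hφ_t (z) (_ : z ∈ S) : HasFDerivWithinAt (φ t) (fderiv ℝ (φ t) z) S z :=
    ((differentiable_of_differentiable_uncurry (hφ₂.differentiable two_ne_zero) t z)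
      |>.hasFDerivAt.hasFDerivWithinAt)
  rw [← lintegral_abs_det_fderiv_eq_addHaar_image volume hS hφ_t
    (leftInverse_flow_neg hφ_zero hφ_add t).injective.injOn]
  calc ENNReal.ofReal (Real.exp (-(K * C))) * volume S
      = ∫⁻ _ in S, ENNReal.ofReal (Real.exp (-(K * C))) := (setLIntegral_const S _).symm
    _ ≤ ∫⁻ z in S, ENNReal.ofReal |(fderiv ℝ (φ t) z).det| :=
        setLIntegral_mono' hS fun z hz => ENNReal.ofReal_le_ofReal (hdet z hz)

/-- let `Z` be a smooth vector field on `ℝⁿ` with global flow `φ`, such that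
`|div Z| ≤ K ‖Z‖` everywhere, and let `S` be a measurable set along which the time-integral of
`‖Z‖` along the flow is bounded by `C` for all nonnegative times. Then for every `t ≥ 0`,
`vol(φ_t(S)) ≥ e^{−K·C} vol(S)`. -/
theorem volume_flow_lower_bound {n : ℕ} (hn : 1 ≤ n)
    (Z : EuclideanSpace ℝ (Fin n) → EuclideanSpace ℝ (Fin n)) (hZ : ContDiff ℝ (⊤ : ℕ∞) Z)
    (φ : ℝ → EuclideanSpace ℝ (Fin n) → EuclideanSpace ℝ (Fin n))
    (hφ_smooth : ContDiff ℝ (⊤ : ℕ∞) (fun p : ℝ × EuclideanSpace ℝ (Fin n) => φ p.1 p.2))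
    (hφ_zero : ∀ x, φ 0 x = x)
    (hφ_add : ∀ t s x, φ (t + s) x = φ t (φ s x))
    (hφ_deriv : ∀ t x, HasDerivAt (fun τ => φ τ x) (Z (φ t x)) t)
    (K C : ℝ) (hK : 0 ≤ K) (hC : 0 ≤ C)
    (hdiv : ∀ x, |divergence Z x| ≤ K * ‖Z x‖)
    (S : Set (EuclideanSpace ℝ (Fin n))) (hS : MeasurableSet S)
    (hint : ∀ z ∈ S, ∀ t : ℝ, 0 ≤ t → (∫ s in (0:ℝ)..t, ‖Z (φ s z)‖) ≤ C) :
    ∀ t : ℝ, 0 ≤ t →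
      ENNReal.ofReal (Real.exp (-(K * C))) * MeasureTheory.volume S ≤
        MeasureTheory.volume (φ t '' S) :=
  volume_flow_lower_bound_general Z hZ φ hφ_smooth hφ_zero hφ_add hφ_deriv K C hK hdiv S hS hint
end

section
/- Let U ⊆ ℝ⁴ be an open set and A₁, A₂, A₃ : U → ℝ be C^∞ functions. Define the vector fields Xⁱ := ∂_{x_i} + A_i·∂_{x_4} on U for i = 1,2,3, and for i,j ∈ {1,2,3} the functions c_{ij} := ∂_{x_i}A_j − ∂_{x_j}A_i + A_i·∂_{x_4}A_j − A_j·∂_{x_4}A_i (so that [Xⁱ,Xʲ] = c_{ij}·∂_{x_4}). Let Z := c_{23}·X¹ + c_{31}·X² + c_{12}·X³. Then Z has controlled divergence: there exist C^∞ functions g₁, g₂, g₃ : U → ℝ such that div(Z) = g₁·c_{23} + g₂·c_{31} + g₃·c_{12} on U. -/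
/-- Partial derivative `∂_{x_i} g (x)` of `g : ℝ⁴ → ℝ` in the `i`-th coordinate direction. -/
noncomputable def pd4 (i : Fin 4) (g : (Fin 4 → ℝ) → ℝ) (x : Fin 4 → ℝ) : ℝ :=
  fderiv ℝ g x (Pi.single i 1)

/-- The bracket coefficients `c_{ij} = ∂_{x_i}A_j − ∂_{x_j}A_i + A_i ∂_{x_4}A_j − A_j ∂_{x_4}A_i`
(indices `i, j ∈ {1,2,3}` are represented by `Fin 3`, and `x₄` is coordinate `3 : Fin 4`),
so that `[Xⁱ, Xʲ] = c_{ij} ∂_{x_4}`. -/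
noncomputable def cbr4 (A : Fin 3 → (Fin 4 → ℝ) → ℝ) (i j : Fin 3) (x : Fin 4 → ℝ) : ℝ :=
  pd4 i.castSucc (A j) x - pd4 j.castSucc (A i) x
    + A i x * pd4 3 (A j) x - A j x * pd4 3 (A i) x

/-- The vector field `Xⁱ = ∂_{x_i} + A_i ∂_{x_4}` on `ℝ⁴` (for `i ∈ {1,2,3}`). -/
noncomputable def XF4 (A : Fin 3 → (Fin 4 → ℝ) → ℝ) (i : Fin 3) (x : Fin 4 → ℝ) :
    Fin 4 → ℝ :=
  (Pi.single i.castSucc 1 : Fin 4 → ℝ) + A i x • (Pi.single (3 : Fin 4) 1 : Fin 4 → ℝ)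

/-- The vector field `Z = c_{23}·X¹ + c_{31}·X² + c_{12}·X³` (0-based indices). -/
noncomputable def ZF4 (A : Fin 3 → (Fin 4 → ℝ) → ℝ) (x : Fin 4 → ℝ) : Fin 4 → ℝ :=
  cbr4 A 1 2 x • XF4 A 0 x + cbr4 A 2 0 x • XF4 A 1 x + cbr4 A 0 1 x • XF4 A 2 x

/-- The divergence `div(Z)(x) = ∑ₖ ∂_{x_k} Z_k(x)` of a vector field `Z` on `ℝ⁴`. -/
noncomputable def div4 (Z : (Fin 4 → ℝ) → (Fin 4 → ℝ)) (x : Fin 4 → ℝ) : ℝ :=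
  ∑ k : Fin 4, fderiv ℝ (fun y => Z y k) x (Pi.single k 1)

/-!
Since `div(c Xⁱ) = Xⁱ(c) + c ∂_{x_4}A_i`, we get
`div Z = ∑_cyc Xⁱ(c_{jk}) + ∑_cyc c_{jk} ∂_{x_4}A_i`. The Jacobi identity for `X¹, X², X³`,
together with `[Xⁱ, c_{jk} ∂_{x_4}] = (Xⁱ(c_{jk}) - c_{jk} ∂_{x_4}A_i) ∂_{x_4}`, says that the two
cyclic sums agree, so `div Z = 2 ∑_cyc c_{jk} ∂_{x_4}A_i` and one may take `gᵢ = 2 ∂_{x_4}A_i`.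
-/

section SecondDerivative

variable {E F : Type*} [NormedAddCommGroup E] [NormedSpace ℝ E]
  [NormedAddCommGroup F] [NormedSpace ℝ F] {f : E → F} {x : E}

theorem fderiv_fderiv_apply_const (hf : ContDiffAt ℝ 2 f x) (v w : E) :
    fderiv ℝ (fun y => fderiv ℝ f y v) x w = fderiv ℝ (fderiv ℝ f) x w v := by
  have hdf : DifferentiableAt ℝ (fderiv ℝ f) x :=
    (hf.fderiv_right (m := 1) le_rfl).differentiableAt one_ne_zero
  rw [(hdf.hasFDerivAt.clm_apply (hasFDerivAt_const v x)).fderiv]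
  simp

theorem fderiv_fderiv_apply_comm (hf : ContDiffAt ℝ 2 f x) (v w : E) :
    fderiv ℝ (fun y => fderiv ℝ f y v) x w = fderiv ℝ (fun y => fderiv ℝ f y w) x v := by
  rw [fderiv_fderiv_apply_const hf, fderiv_fderiv_apply_const hf]
  exact hf.isSymmSndFDerivAt (by simp [minSmoothness_of_isRCLikeNormedField]) w v

theorem differentiableAt_fderiv_apply_const (hf : ContDiffAt ℝ 2 f x) (v : E) :
    DifferentiableAt ℝ (fun y => fderiv ℝ f y v) x :=
  ((hf.fderiv_right (m := 1) le_rfl).differentiableAt one_ne_zero).clm_apply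
    (differentiableAt_const v)

end SecondDerivative

section PartialDerivative

variable {f g : (Fin 4 → ℝ) → ℝ} {x : Fin 4 → ℝ}

theorem pd4_comm (hf : ContDiffAt ℝ 2 f x) (i k : Fin 4) :
    pd4 k (pd4 i f) x = pd4 i (pd4 k f) x :=
  fderiv_fderiv_apply_comm hf _ _

theorem differentiableAt_pd4 (hf : ContDiffAt ℝ 2 f x) (i : Fin 4) :
    DifferentiableAt ℝ (pd4 i f) x :=
  differentiableAt_fderiv_apply_const hf _

theorem pd4_add (hf : DifferentiableAt ℝ f x) (hg : DifferentiableAt ℝ g x) (k : Fin 4) :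
    pd4 k (fun y => f y + g y) x = pd4 k f x + pd4 k g x := by
  simp [pd4, fderiv_fun_add hf hg]

theorem pd4_sub (hf : DifferentiableAt ℝ f x) (hg : DifferentiableAt ℝ g x) (k : Fin 4) :
    pd4 k (fun y => f y - g y) x = pd4 k f x - pd4 k g x := by
  simp [pd4, fderiv_fun_sub hf hg]

theorem pd4_mul (hf : DifferentiableAt ℝ f x) (hg : DifferentiableAt ℝ g x) (k : Fin 4) :
    pd4 k (fun y => f y * g y) x = f x * pd4 k g x + g x * pd4 k f x := by
  simp [pd4, fderiv_fun_mul hf hg]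

theorem contDiffOn_pd4 {U : Set (Fin 4 → ℝ)} (hU : IsOpen U)
    (hf : ContDiffOn ℝ (⊤ : ℕ∞) f U) (k : Fin 4) : ContDiffOn ℝ (⊤ : ℕ∞) (pd4 k f) U := by
  have hdf : ContDiffOn ℝ (⊤ : ℕ∞) (fderiv ℝ f) U :=
    ((contDiffOn_infty_iff_fderiv_of_isOpen hU).mp hf).2
  exact hdf.clm_apply contDiffOn_const

end PartialDerivative

section Divergence

variable {Z W : (Fin 4 → ℝ) → Fin 4 → ℝ} {f : (Fin 4 → ℝ) → ℝ} {x : Fin 4 → ℝ}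

theorem div4_add (hZ : DifferentiableAt ℝ Z x) (hW : DifferentiableAt ℝ W x) :
    div4 (fun y => Z y + W y) x = div4 Z x + div4 W x := by
  simp only [div4, ← Finset.sum_add_distrib, Pi.add_apply]
  refine Finset.sum_congr rfl fun k _ => ?_
  rw [fderiv_fun_add (differentiableAt_pi.1 hZ k) (differentiableAt_pi.1 hW k)]
  rfl

theorem div4_smul_single (j : Fin 4) :
    div4 (fun y => f y • (Pi.single j 1 : Fin 4 → ℝ)) x = pd4 j f x := by
  rw [div4, Finset.sum_eq_single j]
  · simp [pd4]
  · intro k _ hk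
    simp [hk]
  · simp

end Divergence

/-- `Xⁱ(f)`, the derivative of `f` along the vector field `XF4 A i`. -/
noncomputable def xDeriv (A : Fin 3 → (Fin 4 → ℝ) → ℝ) (i : Fin 3) (f : (Fin 4 → ℝ) → ℝ)
    (x : Fin 4 → ℝ) : ℝ :=
  pd4 i.castSucc f x + A i x * pd4 3 f x

section VectorFields

variable {A : Fin 3 → (Fin 4 → ℝ) → ℝ} {f g : (Fin 4 → ℝ) → ℝ} {x : Fin 4 → ℝ}

theorem cbr4_eq_xDeriv_sub (i j : Fin 3) :
    cbr4 A i j = fun y => xDeriv A i (A j) y - xDeriv A j (A i) y := by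
  funext y
  simp only [cbr4, xDeriv]
  ring

theorem differentiableAt_xDeriv {i : Fin 3} (hA : DifferentiableAt ℝ (A i) x)
    (hf : ContDiffAt ℝ 2 f x) : DifferentiableAt ℝ (xDeriv A i f) x :=
  (differentiableAt_pd4 hf _).add (hA.fun_mul (differentiableAt_pd4 hf 3))

theorem differentiableAt_cbr4 (hA : ∀ i, ContDiffAt ℝ 2 (A i) x) (i j : Fin 3) :
    DifferentiableAt ℝ (cbr4 A i j) x := by
  have hA' i : DifferentiableAt ℝ (A i) x := (hA i).differentiableAt two_ne_zero
  rw [cbr4_eq_xDeriv_sub]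
  exact (differentiableAt_xDeriv (hA' i) (hA j)).sub (differentiableAt_xDeriv (hA' j) (hA i))

theorem xDeriv_sub {i : Fin 3} (hf : DifferentiableAt ℝ f x) (hg : DifferentiableAt ℝ g x) :
    xDeriv A i (fun y => f y - g y) x = xDeriv A i f x - xDeriv A i g x := by
  simp only [xDeriv, pd4_sub hf hg]
  ring

theorem pd4_xDeriv {j : Fin 3} (hA : DifferentiableAt ℝ (A j) x) (hf : ContDiffAt ℝ 2 f x)
    (k : Fin 4) :
    pd4 k (xDeriv A j f) x
      = pd4 k (pd4 j.castSucc f) x + A j x * pd4 k (pd4 3 f) x + pd4 3 f x * pd4 k (A j) x := by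
  unfold xDeriv
  rw [pd4_add (differentiableAt_pd4 hf _) (hA.fun_mul (differentiableAt_pd4 hf 3)),
    pd4_mul hA (differentiableAt_pd4 hf 3)]
  ring

theorem xDeriv_xDeriv_sub_xDeriv_xDeriv {i j : Fin 3} (hAi : DifferentiableAt ℝ (A i) x)
    (hAj : DifferentiableAt ℝ (A j) x) (hf : ContDiffAt ℝ 2 f x) :
    xDeriv A i (xDeriv A j f) x - xDeriv A j (xDeriv A i f) x = cbr4 A i j x * pd4 3 f x := by
  rw [xDeriv, xDeriv, pd4_xDeriv hAj hf, pd4_xDeriv hAj hf, pd4_xDeriv hAi hf, pd4_xDeriv hAi hf,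
    pd4_comm hf j.castSucc i.castSucc, pd4_comm hf 3 i.castSucc, pd4_comm hf 3 j.castSucc, cbr4]
  ring

/-- The Jacobi identity for `X¹, X², X³`, read off in the `∂_{x_4}` component. -/
theorem xDeriv_cbr4_cyclic (hA : ∀ i, ContDiffAt ℝ 2 (A i) x) (i j k : Fin 3) :
    xDeriv A i (cbr4 A j k) x + xDeriv A j (cbr4 A k i) x + xDeriv A k (cbr4 A i j) x
      = cbr4 A i j x * pd4 3 (A k) x + cbr4 A j k x * pd4 3 (A i) x
        + cbr4 A k i x * pd4 3 (A j) x := by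
  have hA' i : DifferentiableAt ℝ (A i) x := (hA i).differentiableAt two_ne_zero
  have hX i j : DifferentiableAt ℝ (xDeriv A i (A j)) x := differentiableAt_xDeriv (hA' i) (hA j)
  have hij := xDeriv_xDeriv_sub_xDeriv_xDeriv (hA' i) (hA' j) (hA k)
  have hjk := xDeriv_xDeriv_sub_xDeriv_xDeriv (hA' j) (hA' k) (hA i)
  have hki := xDeriv_xDeriv_sub_xDeriv_xDeriv (hA' k) (hA' i) (hA j)
  simp only [cbr4_eq_xDeriv_sub, xDeriv_sub (hX _ _) (hX _ _)] at hij hjk hki ⊢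
  linear_combination hij + hjk + hki

end VectorFields

section DivergenceOfZ

variable {A : Fin 3 → (Fin 4 → ℝ) → ℝ} {x : Fin 4 → ℝ}

theorem differentiableAt_XF4 {i : Fin 3} (hA : DifferentiableAt ℝ (A i) x) :
    DifferentiableAt ℝ (XF4 A i) x := by
  unfold XF4
  fun_prop

theorem div4_smul_XF4 {c : (Fin 4 → ℝ) → ℝ} {i : Fin 3} (hc : DifferentiableAt ℝ c x)
    (hA : DifferentiableAt ℝ (A i) x) :
    div4 (fun y => c y • XF4 A i y) x = xDeriv A i c x + c x * pd4 3 (A i) x := by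
  have hsplit : (fun y => c y • XF4 A i y) = fun y => c y • (Pi.single i.castSucc 1 : Fin 4 → ℝ)
      + (c y * A i y) • (Pi.single 3 1 : Fin 4 → ℝ) := by
    funext y
    simp only [XF4, smul_add, smul_smul]
  rw [hsplit, div4_add (by fun_prop) (by fun_prop), div4_smul_single, div4_smul_single,
    pd4_mul hc hA, xDeriv]
  ring

theorem div4_ZF4 (hA : ∀ i, ContDiffAt ℝ 2 (A i) x) :
    div4 (ZF4 A) x
      = (xDeriv A 0 (cbr4 A 1 2) x + cbr4 A 1 2 x * pd4 3 (A 0) x)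
        + (xDeriv A 1 (cbr4 A 2 0) x + cbr4 A 2 0 x * pd4 3 (A 1) x)
        + (xDeriv A 2 (cbr4 A 0 1) x + cbr4 A 0 1 x * pd4 3 (A 2) x) := by
  have hA' i : DifferentiableAt ℝ (A i) x := (hA i).differentiableAt two_ne_zero
  have hc := differentiableAt_cbr4 hA
  have hterm i j k : DifferentiableAt ℝ (fun y => cbr4 A j k y • XF4 A i y) x :=
    (hc j k).smul (differentiableAt_XF4 (hA' i))
  unfold ZF4
  rw [div4_add ((hterm 0 1 2).fun_add (hterm 1 2 0)) (hterm 2 0 1),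
    div4_add (hterm 0 1 2) (hterm 1 2 0), div4_smul_XF4 (hc 1 2) (hA' 0),
    div4_smul_XF4 (hc 2 0) (hA' 1), div4_smul_XF4 (hc 0 1) (hA' 2)]

end DivergenceOfZ

/-- for smooth `A₁,A₂,A₃` on an open `U ⊆ ℝ⁴` and
`Z = c_{23}·X¹ + c_{31}·X² + c_{12}·X³`, the divergence of `Z` lies in the ideal generated by
`c_{23}, c_{31}, c_{12}`: there are smooth `g₁,g₂,g₃` with
`div(Z) = g₁·c_{23} + g₂·c_{31} + g₃·c_{12}` on `U`. -/
theorem controlled_divergence_dim4 (U : Set (Fin 4 → ℝ)) (hU : IsOpen U)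
    (A : Fin 3 → (Fin 4 → ℝ) → ℝ)
    (hA : ∀ i, ContDiffOn ℝ (⊤ : ℕ∞) (A i) U) :
    ∃ g₁ g₂ g₃ : (Fin 4 → ℝ) → ℝ,
      ContDiffOn ℝ (⊤ : ℕ∞) g₁ U ∧ ContDiffOn ℝ (⊤ : ℕ∞) g₂ U ∧
      ContDiffOn ℝ (⊤ : ℕ∞) g₃ U ∧
      ∀ x ∈ U, div4 (ZF4 A) x =
        g₁ x * cbr4 A 1 2 x + g₂ x * cbr4 A 2 0 x + g₃ x * cbr4 A 0 1 x := by
  have hg i : ContDiffOn ℝ (⊤ : ℕ∞) (fun x => 2 * pd4 3 (A i) x) U :=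
    contDiffOn_const.mul (contDiffOn_pd4 hU (hA i) 3)
  refine ⟨_, _, _, hg 0, hg 1, hg 2, fun x hx => ?_⟩
  have hAx i : ContDiffAt ℝ 2 (A i) x :=
    ((hA i).contDiffAt (hU.mem_nhds hx)).of_le (WithTop.coe_le_coe.mpr le_top)
  rw [div4_ZF4 hAx]
  linear_combination xDeriv_cbr4_cyclic hAx 0 1 2
end

section
/- Let R be a commutative ring, L a Lie algebra over R, n ≥ 1, J ⊆ {1,…,n} a finite index set, x : J → L a family of elements of L, and c a map assigning to each 3-element subset of J an element of R. For distinct j, k, l ∈ J set ε_{jkl} := ε(J,j)·ε(J∖{j},k)·ε(J∖{j,k},l), where ε(I,i) := (−1)^{#{r∈I : r<i}} for i ∈ I. Then Σ ε_{jkl}·c({j,k,l})·⁅⁅x_j, x_k⁆, x_l⁆ = 0, where the sum ranges over all ordered triples (j,k,l) of pairwise distinct elements of J. -/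
/-- The sign `ε(I,i) = (-1)^{#{r ∈ I : r < i}}`, as an element of the commutative ring `R`. -/
def eps (R : Type*) [CommRing R] {n : ℕ} (I : Finset (Fin n)) (i : Fin n) : R :=
  (-1) ^ (I.filter (fun r => r < i)).card

lemma eps_swap_lt (R : Type*) [CommRing R] {n : ℕ} {I : Finset (Fin n)} {j k : Fin n}
    (hj : j ∈ I) (hjk : j < k) :
    eps R I j * eps R (I.erase j) k = -(eps R I k * eps R (I.erase k) j) := by
  unfold eps
  rw [Finset.filter_erase, Finset.filter_erase]
  have hmem : j ∈ I.filter (fun r => r < k) := Finset.mem_filter.2 ⟨hj, hjk⟩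
  have hk' : k ∉ I.filter (fun r => r < j) := by
    simp only [Finset.mem_filter, not_and]
    exact fun _ hkj => absurd (hkj.trans hjk) (lt_irrefl _)
  rw [Finset.card_erase_of_mem hmem, Finset.erase_eq_of_notMem hk']
  obtain ⟨m, hm⟩ : ∃ m, (I.filter (fun r => r < k)).card = m + 1 :=
    ⟨(I.filter (fun r => r < k)).card - 1, by
      have := Finset.card_pos.2 ⟨j, hmem⟩; omega⟩
  rw [hm]
  simp [pow_succ]
  ring

lemma eps_swap (R : Type*) [CommRing R] {n : ℕ} {I : Finset (Fin n)} {j k : Fin n}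
    (hj : j ∈ I) (hk : k ∈ I) (hjk : j ≠ k) :
    eps R I j * eps R (I.erase j) k = -(eps R I k * eps R (I.erase k) j) := by
  rcases lt_or_gt_of_ne hjk with h | h
  · exact eps_swap_lt R hj h
  · rw [eps_swap_lt R hk h]; ring

section
variable (R : Type*) [CommRing R] {n : ℕ} (J : Finset (Fin n))

/-- The full sign `ε_{jkl}`. -/
private def E (j k l : Fin n) : R :=
  eps R J j * eps R (J.erase j) k * eps R ((J.erase j).erase k) l

lemma E_swap12 {j k : Fin n} (l : Fin n) (hj : j ∈ J) (hk : k ∈ J) (hjk : j ≠ k) :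
    E R J j k l = -E R J k j l := by
  unfold E
  rw [Finset.erase_right_comm (a := j) (b := k)]
  have := eps_swap R hj hk hjk
  rw [mul_comm (eps R J j) (eps R (J.erase j) k)] at this
  rw [mul_comm (eps R J j) (eps R (J.erase j) k), this]
  ring

lemma E_swap23 {j k l : Fin n} (hj : j ∈ J) (hk : k ∈ J) (hl : l ∈ J)
    (hjk : j ≠ k) (hjl : j ≠ l) (hkl : k ≠ l) :
    E R J j k l = -E R J j l k := by
  unfold E
  have hk' : k ∈ J.erase j := Finset.mem_erase.2 ⟨hjk.symm, hk⟩
  have hl' : l ∈ J.erase j := Finset.mem_erase.2 ⟨hjl.symm, hl⟩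
  have := eps_swap R hk' hl' hkl
  rw [mul_assoc, mul_assoc, this]
  ring

lemma E_cyclic {j k l : Fin n} (hj : j ∈ J) (hk : k ∈ J) (hl : l ∈ J)
    (hjk : j ≠ k) (hjl : j ≠ l) (hkl : k ≠ l) :
    E R J j k l = E R J k l j := by
  rw [E_swap12 R J l hj hk hjk, E_swap23 R J hk hj hl hjk.symm hkl hjl]
  ring

end

theorem signed_jacobi_sum_eq_zero {R : Type*} [CommRing R] {L : Type*}
    [LieRing L] [LieAlgebra R L] {n : ℕ} (hn : 1 ≤ n)
    (J : Finset (Fin n)) (x : Fin n → L) (c : Finset (Fin n) → R) :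
    ∑ j ∈ J, ∑ k ∈ J.erase j, ∑ l ∈ (J.erase j).erase k,
      (eps R J j * eps R (J.erase j) k * eps R ((J.erase j).erase k) l * c {j, k, l}) •
        ⁅⁅x j, x k⁆, x l⁆ = 0 := by
  classical
  set T : (Σ _ : Fin n, Σ _ : Fin n, Fin n) → L := fun p =>
    (E R J p.1 p.2.1 p.2.2 * c {p.1, p.2.1, p.2.2}) • ⁅⁅x p.1, x p.2.1⁆, x p.2.2⁆ with hT
  set S : Finset (Σ _ : Fin n, Σ _ : Fin n, Fin n) :=
    J.sigma (fun j => (J.erase j).sigma (fun k => (J.erase j).erase k)) with hS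
  have hmem : ∀ p : (Σ _ : Fin n, Σ _ : Fin n, Fin n), p ∈ S ↔
      (p.1 ∈ J ∧ p.2.1 ∈ J ∧ p.2.2 ∈ J ∧ p.1 ≠ p.2.1 ∧ p.1 ≠ p.2.2 ∧ p.2.1 ≠ p.2.2) := by
    rintro ⟨j, k, l⟩
    simp only [hS, Finset.mem_sigma, Finset.mem_erase]
    constructor
    · rintro ⟨h1, ⟨h2, h3⟩, ⟨h4, h5, h6⟩⟩; exact ⟨h1, h3, h6, Ne.symm h2, Ne.symm h5, Ne.symm h4⟩
    · rintro ⟨h1, h2, h3, h4, h5, h6⟩; exact ⟨h1, ⟨Ne.symm h4, h2⟩, h6.symm, h5.symm, h3⟩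
  have key : (∑ j ∈ J, ∑ k ∈ J.erase j, ∑ l ∈ (J.erase j).erase k,
      (eps R J j * eps R (J.erase j) k * eps R ((J.erase j).erase k) l * c {j, k, l}) •
        ⁅⁅x j, x k⁆, x l⁆) = ∑ p ∈ S, T p := by
    rw [hS, Finset.sum_sigma]
    exact Finset.sum_congr rfl fun j _ =>
      (Finset.sum_sigma (J.erase j) (fun k => (J.erase j).erase k)
        (fun s => T ⟨j, s⟩)).symm
  rw [key]
  -- split S according to which coordinate is the minimum
  set q₁ : (Σ _ : Fin n, Σ _ : Fin n, Fin n) → Prop := fun p => p.1 < p.2.1 ∧ p.1 < p.2.2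
    with hq₁
  set q₂ : (Σ _ : Fin n, Σ _ : Fin n, Fin n) → Prop := fun p => p.2.1 < p.1 ∧ p.2.1 < p.2.2
    with hq₂
  have hq21 : ∀ p, q₂ p → ¬ q₁ p := by
    rintro ⟨j, k, l⟩ h2 h1
    exact absurd (h1.1.trans h2.1) (lt_irrefl _)
  have hsplit : ∑ p ∈ S, T p =
      ∑ p ∈ S.filter q₁, T p + (∑ p ∈ S.filter q₂, T p +
      ∑ p ∈ S.filter (fun p => ¬ q₁ p ∧ ¬ q₂ p), T p) := by
    rw [← Finset.sum_filter_add_sum_filter_not S q₁ T]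
    congr 1
    rw [← Finset.sum_filter_add_sum_filter_not (S.filter (fun p => ¬ q₁ p)) q₂ T,
      Finset.filter_filter, Finset.filter_filter]
    congr 1
    · apply Finset.sum_congr _ (fun _ _ => rfl)
      apply Finset.filter_congr
      intro p _
      constructor
      · exact fun h => h.2
      · exact fun h => ⟨hq21 p h, h⟩
  rw [hsplit]
  -- reindex the q₂ part and the rest as images of the q₁ part under cyclic rotations
  have h2 : ∑ p ∈ S.filter q₂, T p = ∑ p ∈ S.filter q₁, T ⟨p.2.2, p.1, p.2.1⟩ := by
    refine (Finset.sum_nbij' (fun p => (⟨p.2.2, p.1, p.2.1⟩ : Σ _ : Fin n, Σ _ : Fin n, Fin n))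
      (fun p => ⟨p.2.1, p.2.2, p.1⟩) ?_ ?_ ?_ ?_ ?_).symm
    · rintro ⟨j, k, l⟩ hp
      rw [Finset.mem_filter, hmem] at hp ⊢
      obtain ⟨⟨h1, h2, h3, h4, h5, h6⟩, hq⟩ := hp
      simp only [hq₁, hq₂] at hq ⊢
      exact ⟨⟨h3, h1, h2, Ne.symm h5, Ne.symm h6, h4⟩, hq.2, hq.1⟩
    · rintro ⟨j, k, l⟩ hp
      rw [Finset.mem_filter, hmem] at hp ⊢
      obtain ⟨⟨h1, h2, h3, h4, h5, h6⟩, hq⟩ := hp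
      simp only [hq₁, hq₂] at hq ⊢
      exact ⟨⟨h2, h3, h1, h6, Ne.symm h4, Ne.symm h5⟩, hq.2, hq.1⟩
    · rintro ⟨j, k, l⟩ _; rfl
    · rintro ⟨j, k, l⟩ _; rfl
    · rintro ⟨j, k, l⟩ _; rfl
  have h3 : ∑ p ∈ S.filter (fun p => ¬ q₁ p ∧ ¬ q₂ p), T p =
      ∑ p ∈ S.filter q₁, T ⟨p.2.1, p.2.2, p.1⟩ := by
    refine (Finset.sum_nbij' (fun p => (⟨p.2.1, p.2.2, p.1⟩ : Σ _ : Fin n, Σ _ : Fin n, Fin n))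
      (fun p => ⟨p.2.2, p.1, p.2.1⟩) ?_ ?_ ?_ ?_ ?_).symm
    · rintro ⟨j, k, l⟩ hp
      rw [Finset.mem_filter, hmem] at hp ⊢
      obtain ⟨⟨h1, h2, h3, h4, h5, h6⟩, hq⟩ := hp
      simp only [hq₁, hq₂] at hq ⊢
      refine ⟨⟨h2, h3, h1, h6, Ne.symm h4, Ne.symm h5⟩, ?_, ?_⟩
      · rintro ⟨ha, hb⟩; exact absurd (hq.1.trans hb) (lt_irrefl _)
      · rintro ⟨ha, hb⟩; exact absurd (hq.2.trans hb) (lt_irrefl _)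
    · rintro ⟨j, k, l⟩ hp
      rw [Finset.mem_filter, hmem] at hp ⊢
      obtain ⟨⟨h1, h2, h3, h4, h5, h6⟩, hq1, hq2⟩ := hp
      simp only [hq₁, hq₂, not_and, not_lt] at hq1 hq2
      have hlmin : l < j ∧ l < k := by
        rcases lt_or_gt_of_ne h4 with h | h
        · have hlj : l < j := lt_of_le_of_ne (hq1 h) (Ne.symm h5)
          exact ⟨hlj, hlj.trans h⟩
        · have hlk : l < k := lt_of_le_of_ne (hq2 h) (Ne.symm h6)
          exact ⟨hlk.trans h, hlk⟩
      simp only [hq₁]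
      exact ⟨⟨h3, h1, h2, Ne.symm h5, Ne.symm h6, h4⟩, hlmin.1, hlmin.2⟩
    · rintro ⟨j, k, l⟩ _; rfl
    · rintro ⟨j, k, l⟩ _; rfl
    · rintro ⟨j, k, l⟩ _; rfl
  rw [h2, h3, ← Finset.sum_add_distrib, ← Finset.sum_add_distrib]
  apply Finset.sum_eq_zero
  rintro ⟨j, k, l⟩ hp
  rw [Finset.mem_filter, hmem] at hp
  obtain ⟨⟨h1, h2, h3, h4, h5, h6⟩, _⟩ := hp
  simp only [hT]
  -- c is symmetric in its set argument
  have hc1 : ({l, j, k} : Finset (Fin n)) = {j, k, l} := by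
    ext a; simp [Finset.mem_insert]; tauto
  have hc2 : ({k, l, j} : Finset (Fin n)) = {j, k, l} := by
    ext a; simp [Finset.mem_insert]; tauto
  have hE1 : E R J l j k = E R J j k l :=
    (E_cyclic R J h3 h1 h2 (Ne.symm h5) (Ne.symm h6) h4)
  have hE2 : E R J k l j = E R J j k l :=
    (E_cyclic R J h1 h2 h3 h4 h5 h6).symm
  rw [hc1, hc2, hE1, hE2, ← smul_add, ← smul_add]
  have jac : ⁅⁅x j, x k⁆, x l⁆ + (⁅⁅x l, x j⁆, x k⁆ + ⁅⁅x k, x l⁆, x j⁆) = 0 := by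
    have h := lie_jacobi (x l) (x j) (x k)
    rw [← lie_skew ⁅x j, x k⁆ (x l), ← lie_skew ⁅x l, x j⁆ (x k), ← lie_skew ⁅x k, x l⁆ (x j)]
    rw [show ⁅x l, ⁅x j, x k⁆⁆ = -(⁅x j, ⁅x k, x l⁆⁆ + ⁅x k, ⁅x l, x j⁆⁆) from by
      rw [eq_neg_iff_add_eq_zero, ← h]; abel]
    abel
  rw [jac, smul_zero]
end
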